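/- Let I ⊆ ℝ be an interval, Ω : I → ℝ³, c₁, c₂ : I → ℝ, and let P, Δ₁, Δ₂ : I → ℝ³ be differentiable with P'(t) = P(t) × Ω(t) + c₁(t) Δ₁(t) + c₂(t) Δ₂(t) and Δᵢ'(t) = Δᵢ(t) × Ω(t) for i = 1, 2 and all t ∈ I. Then the function t ↦ P(t)·(Δ₁(t) × Δ₂(t)) is constant on I. In particular, along solutions of the controlled underwater-vehicle drift system with control u₂ = −(𝒦δ)₁Δ₁ − (𝒦δ)₂Δ₂, the quantity P·(Δ₁ × Δ₂) is conserved. -/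

import Mathlib

/-!
Differentiate `P ⬝ᵥ (Δ₁ ⨯₃ Δ₂)` by the product rule. The control terms `cᵢ Δᵢ` contribute
triple products with a repeated vector, which vanish. The remaining terms are what the
derivation `x ↦ x ⨯₃ Ω` does to the triple product (a volume form), and they cancel because this
map is traceless. So the derivative vanishes on the interval, and the function is constant there.
-/

open Matrix

variable {𝕜 : Type*} [NontriviallyNormedField 𝕜] {x : 𝕜}

theorem HasDerivAt.dotProduct {ι : Type*} [Fintype ι] {u v : 𝕜 → ι → 𝕜} {u' v' : ι → 𝕜}
    (hu : HasDerivAt u u' x) (hv : HasDerivAt v v' x) :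
    HasDerivAt (fun t ↦ u t ⬝ᵥ v t) (u' ⬝ᵥ v x + u x ⬝ᵥ v') x := by
  have hsum := HasDerivAt.fun_sum (u := Finset.univ) fun i _ ↦
    (hasDerivAt_pi.1 hu i).mul (hasDerivAt_pi.1 hv i)
  simpa only [_root_.dotProduct, Finset.sum_add_distrib, Pi.mul_apply] using hsum

theorem HasDerivAt.crossProduct {u v : 𝕜 → Fin 3 → 𝕜} {u' v' : Fin 3 → 𝕜}
    (hu : HasDerivAt u u' x) (hv : HasDerivAt v v' x) :
    HasDerivAt (fun t ↦ u t ⨯₃ v t) (u' ⨯₃ v x + u x ⨯₃ v') x := by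
  rw [hasDerivAt_pi] at hu hv ⊢
  have hcomp (i j : Fin 3) : HasDerivAt (fun t ↦ u t i * v t j - u t j * v t i)
      (u' i * v x j + u x i * v' j - (u' j * v x i + u x j * v' i)) x :=
    ((hu i).mul (hv j)).sub ((hu j).mul (hv i))
  intro k
  fin_cases k <;> simp only [cross_apply, Pi.add_apply, Fin.isValue, Fin.zero_eta, Fin.mk_one,
    Fin.reduceFinMk, cons_val]
  · exact (hcomp 1 2).congr_deriv (by ring)
  · exact (hcomp 2 0).congr_deriv (by ring)
  · exact (hcomp 0 1).congr_deriv (by ring)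

theorem Set.OrdConnected.eq_of_hasDerivAt_eq_zero {E : Type*} [NormedAddCommGroup E]
    [NormedSpace ℝ E] {I : Set ℝ} (hI : I.OrdConnected) {f : ℝ → E}
    (hf : ∀ t ∈ I, HasDerivAt f 0 t) {s t : ℝ} (hs : s ∈ I) (ht : t ∈ I) : f s = f t := by
  have h := hI.convex.norm_image_sub_le_of_norm_hasDerivWithin_le (C := 0)
    (fun τ hτ ↦ (hf τ hτ).hasDerivWithinAt) (fun _ _ ↦ norm_zero.le) hs ht
  rw [zero_mul, norm_le_zero_iff, sub_eq_zero] at h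
  exact h.symm

theorem triple_product_cross_derivation_eq_zero {R : Type*} [CommRing R] (a b c ω : Fin 3 → R) :
    (a ⨯₃ ω) ⬝ᵥ (b ⨯₃ c) + a ⬝ᵥ ((b ⨯₃ ω) ⨯₃ c + b ⨯₃ (c ⨯₃ ω)) = 0 := by
  simp only [dotProduct, cross_apply, Fin.isValue, Fin.sum_univ_three, cons_val_zero,
    cons_val_one, cons_val, Pi.add_apply]
  ring

/-- Conservation of the Casimir P·(Δ₁ × Δ₂): if P' = P × Ω + c₁ Δ₁ + c₂ Δ₂ and
Δᵢ' = Δᵢ × Ω (i = 1, 2), then P·(Δ₁ × Δ₂) is constant.  (This is the Casimir of the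
controlled underwater-vehicle drift system with control u₂ = −(𝒦δ)₁Δ₁ − (𝒦δ)₂Δ₂,
corresponding to Leonard's Casimir e₃ᵀQRP.) -/
theorem casimir_P_dot_cross_conserved
    (I : Set ℝ) (hI : I.OrdConnected)
    (Ω : ℝ → Fin 3 → ℝ) (c₁ c₂ : ℝ → ℝ)
    (P Δ₁ Δ₂ : ℝ → Fin 3 → ℝ)
    (hP : ∀ t ∈ I, HasDerivAt P (P t ⨯₃ Ω t + c₁ t • Δ₁ t + c₂ t • Δ₂ t) t)
    (hΔ₁ : ∀ t ∈ I, HasDerivAt Δ₁ (Δ₁ t ⨯₃ Ω t) t)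
    (hΔ₂ : ∀ t ∈ I, HasDerivAt Δ₂ (Δ₂ t ⨯₃ Ω t) t) :
    ∀ s ∈ I, ∀ t ∈ I, P s ⬝ᵥ (Δ₁ s ⨯₃ Δ₂ s) = P t ⬝ᵥ (Δ₁ t ⨯₃ Δ₂ t) := by
  intro s hs t ht
  refine hI.eq_of_hasDerivAt_eq_zero (f := fun τ ↦ P τ ⬝ᵥ (Δ₁ τ ⨯₃ Δ₂ τ))
    (fun τ hτ ↦ ?_) hs ht
  have hderiv := (hP τ hτ).dotProduct ((hΔ₁ τ hτ).crossProduct (hΔ₂ τ hτ))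
  rwa [add_dotProduct, add_dotProduct, smul_dotProduct, smul_dotProduct, dot_self_cross,
    dot_cross_self, smul_zero, smul_zero, add_zero, add_zero,
    triple_product_cross_derivation_eq_zero] at hderiv
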